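/- For every η > 0 there exists N₀ such that for every integer N ≥ N₀, setting h = 1/N, the discrete Hardy constant satisfies S_h ≥ 1/4 + π²/(6 + |log h|)² − η/(log h)². -/

import Mathlib

open MeasureTheory Real Set Filter

noncomputable section

/-- Membership in the finite element space `V_h` with `h = 1/N`: continuous on `[0,1]`
and affine on each mesh interval `[k/N, (k+1)/N]`. -/
def MemVh (N : ℕ) (v : ℝ → ℝ) : Prop :=
  ContinuousOn v (Set.Icc 0 1) ∧
  ∀ k : ℕ, k < N → ∃ a b : ℝ,
    ∀ x ∈ Set.Icc ((k : ℝ) / (N : ℝ)) (((k : ℝ) + 1) / (N : ℝ)), v x = a * x + b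

/-- The discrete Hardy constant `S_h` for the uniform mesh of size `h = 1/N`. -/
def Sdisc (N : ℕ) : ℝ :=
  sInf { s : ℝ | ∃ v : ℝ → ℝ, MemVh N v ∧ v 0 = 0 ∧ (∃ x ∈ Set.Icc (0:ℝ) 1, v x ≠ 0) ∧
    s = (∫ x in (0:ℝ)..1, (deriv v x) ^ 2) / (∫ x in (0:ℝ)..1, (v x) ^ 2 / x ^ 2) }

/-!
Ground-state argument. Put `L = |log h|`, `μ = π / (L + 6)` and let `R = φ' / φ` for
`φ x = √x * sin (μ * (log x + L + 4))`, so that `R' = -(1/4 + μ²) / x² - R²`; `R` is regular on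
`[h, 1]` because the phase runs there from `4μ` to `π - 2μ`. On each mesh cell inside `[h, 1]`
the integrand `v'² - (1/4 + μ²) v² / x²` exceeds `(v² R)'` by `(v' - v R)²`, so these cells
contribute at least the telescoping boundary terms `v² R`. On `[0, h]` the function `v` is linear
and contributes exactly `(3/4 - μ²) v(h)² / h`. The endpoint phases give `h R(h) ≤ 3/4 - μ²` and
`R(1) ≥ 0`, so the total is nonnegative: `S_h ≥ 1/4 + μ²`.
-/

theorem mul_cos_le_one_sub_sq_div_four_mul_sin {y : ℝ} (hy₀ : 0 ≤ y) (hy₁ : y ≤ 1) :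
    y * cos y ≤ (1 - y ^ 2 / 4) * sin y := by
  have hcos : cos y ≤ 1 - y ^ 2 / 2 + y ^ 4 * (5 / 96) := by
    have h := cos_bound (abs_le.2 ⟨by linarith, hy₁⟩)
    rw [abs_of_nonneg hy₀] at h
    linarith [(abs_le.1 h).2]
  calc y * cos y ≤ y * (1 - y ^ 2 / 2 + y ^ 4 * (5 / 96)) := by gcongr
    _ ≤ (1 - y ^ 2 / 4) * (y - y ^ 3 / 6) := by
      nlinarith [pow_nonneg hy₀ 3, pow_le_one₀ hy₀ hy₁ (n := 2)]
    _ ≤ (1 - y ^ 2 / 4) * sin y :=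
      mul_le_mul_of_nonneg_left (sin_ge_sub_cube hy₀) (by nlinarith)

/-- `φ' / φ` for `φ x = √x * sin (μ * log x + s)`, a solution of `-φ'' = (1/4 + μ²) φ / x²`. -/
def groundStateLogDeriv (μ s x : ℝ) : ℝ :=
  (1 / 2 + μ * (cos (μ * log x + s) / sin (μ * log x + s))) / x

theorem hasDerivAt_groundStateLogDeriv {μ s x : ℝ} (hx : 0 < x)
    (hsin : sin (μ * log x + s) ≠ 0) :
    HasDerivAt (groundStateLogDeriv μ s)
      (-((1 / 4 + μ ^ 2) / x ^ 2) - groundStateLogDeriv μ s x ^ 2) x := by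
  have harg : HasDerivAt (fun y => μ * log y + s) (μ * x⁻¹) x :=
    ((hasDerivAt_log hx.ne').const_mul μ).add_const s
  have h := (((harg.cos.div harg.sin hsin).const_mul μ).const_add (1 / 2)).div
    (hasDerivAt_id x) hx.ne'
  refine h.congr_deriv ?_
  simp only [groundStateLogDeriv, id, Pi.div_apply]
  field_simp
  ring

section Cell

variable {v R : ℝ → ℝ} {lam α β a b : ℝ}

theorem continuousOn_affine_sq_div_sq (hα : 0 < α) :
    ContinuousOn (fun x => (a * x + b) ^ 2 / x ^ 2) (Icc α β) :=
  ContinuousOn.div (by fun_prop) (by fun_prop) fun x hx => pow_ne_zero 2 (hα.trans_le hx.1).ne'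

theorem sq_mul_sub_sq_mul_le_of_riccati (hα : 0 < α) (hαβ : α ≤ β)
    (hR : ∀ x ∈ Icc α β, HasDerivAt R (-(lam / x ^ 2) - R x ^ 2) x) :
    (a * β + b) ^ 2 * R β - (a * α + b) ^ 2 * R α ≤
      a ^ 2 * (β - α) - lam * ∫ x in α..β, (a * x + b) ^ 2 / x ^ 2 := by
  have hw : ∀ x, HasDerivAt (fun x => (a * x + b) ^ 2) (2 * (a * x + b) * a) x := fun x =>
    ((((hasDerivAt_id' x).const_mul a).add_const b).fun_pow 2).congr_deriv (by ring)
  have hint : IntervalIntegrable (fun x => (a * x + b) ^ 2 / x ^ 2) volume α β :=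
    (continuousOn_affine_sq_div_sq hα).intervalIntegrable_of_Icc hαβ
  have key := intervalIntegral.sub_le_integral_of_hasDeriv_right_of_le hαβ
    (g := fun x => (a * x + b) ^ 2 * R x)
    (g' := fun x => 2 * (a * x + b) * a * R x + (a * x + b) ^ 2 * (-(lam / x ^ 2) - R x ^ 2))
    (φ := fun x => a ^ 2 - lam * ((a * x + b) ^ 2 / x ^ 2))
    (fun x hx => ((hw x).mul (hR x hx)).continuousAt.continuousWithinAt)
    (fun x hx => ((hw x).mul (hR x (Ioo_subset_Icc_self hx))).hasDerivWithinAt)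
    (continuousOn_const.sub
      (continuousOn_const.mul (continuousOn_affine_sq_div_sq hα))).integrableOn_Icc
    fun x _ => by
      have picone : a ^ 2 - lam * ((a * x + b) ^ 2 / x ^ 2) -
          (2 * (a * x + b) * a * R x + (a * x + b) ^ 2 * (-(lam / x ^ 2) - R x ^ 2)) =
          (a - (a * x + b) * R x) ^ 2 := by ring
      linarith [sq_nonneg (a - (a * x + b) * R x)]
  rw [intervalIntegral.integral_sub intervalIntegrable_const (hint.const_mul lam),
    intervalIntegral.integral_const_mul, intervalIntegral.integral_const, smul_eq_mul] at key
  linarith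

theorem deriv_eq_of_eqOn_affine (hv : EqOn v (fun x => a * x + b) (Icc α β)) {x : ℝ}
    (hx : x ∈ Ioo α β) : deriv v x = a := by
  have hev : (fun y => a * y + b) =ᶠ[nhds x] v :=
    Filter.mem_of_superset (Ioo_mem_nhds hx.1 hx.2) fun y hy =>
      (hv (Ioo_subset_Icc_self hy)).symm
  simpa using ((((hasDerivAt_id x).const_mul a).add_const b).congr_of_eventuallyEq hev.symm).deriv

theorem intervalIntegrable_deriv_sq_of_eqOn_affine (hαβ : α ≤ β)
    (hv : EqOn v (fun x => a * x + b) (Icc α β)) :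
    IntervalIntegrable (fun x => deriv v x ^ 2) volume α β :=
  (intervalIntegrable_const (c := a ^ 2)).congr_uIoo fun x hx => by
    rw [uIoo_of_le hαβ] at hx
    rw [deriv_eq_of_eqOn_affine hv hx]

theorem integral_deriv_sq_of_eqOn_affine (hαβ : α ≤ β)
    (hv : EqOn v (fun x => a * x + b) (Icc α β)) :
    ∫ x in α..β, deriv v x ^ 2 = a ^ 2 * (β - α) := by
  rw [intervalIntegral.integral_congr_Ioo_of_le hαβ (g := fun _ => a ^ 2)
    fun x hx => by rw [deriv_eq_of_eqOn_affine hv hx]]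
  simp [mul_comm]

theorem sq_mul_sub_sq_mul_le_of_eqOn_affine (hα : 0 < α) (hαβ : α ≤ β)
    (hv : EqOn v (fun x => a * x + b) (Icc α β))
    (hR : ∀ x ∈ Icc α β, HasDerivAt R (-(lam / x ^ 2) - R x ^ 2) x) :
    v β ^ 2 * R β - v α ^ 2 * R α ≤
      (∫ x in α..β, deriv v x ^ 2) - lam * ∫ x in α..β, v x ^ 2 / x ^ 2 := by
  rw [hv ⟨hαβ, le_rfl⟩, hv ⟨le_rfl, hαβ⟩, integral_deriv_sq_of_eqOn_affine hαβ hv,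
    intervalIntegral.integral_congr (g := fun x => (a * x + b) ^ 2 / x ^ 2) fun x hx => by
      rw [uIcc_of_le hαβ] at hx
      rw [hv hx]]
  exact sq_mul_sub_sq_mul_le_of_riccati hα hαβ hR

theorem intervalIntegrable_sq_div_sq_of_eqOn_affine (hα : 0 < α) (hαβ : α ≤ β)
    (hv : EqOn v (fun x => a * x + b) (Icc α β)) :
    IntervalIntegrable (fun x => v x ^ 2 / x ^ 2) volume α β :=
  ((continuousOn_affine_sq_div_sq hα).intervalIntegrable_of_Icc hαβ).congr_uIoo fun x hx => by
    rw [uIoo_of_le hαβ] at hx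
    rw [hv (Ioo_subset_Icc_self hx)]

theorem sq_div_sq_eq_of_eqOn_linear (hv : EqOn v (fun x => a * x) (Icc 0 β)) {x : ℝ}
    (hx : x ∈ Ioo 0 β) : v x ^ 2 / x ^ 2 = a ^ 2 := by
  rw [hv (Ioo_subset_Icc_self hx)]
  field_simp [hx.1.ne']

theorem intervalIntegrable_sq_div_sq_of_eqOn_linear (hβ : 0 ≤ β)
    (hv : EqOn v (fun x => a * x) (Icc 0 β)) :
    IntervalIntegrable (fun x => v x ^ 2 / x ^ 2) volume 0 β :=
  (intervalIntegrable_const (c := a ^ 2)).congr_uIoo fun x hx => by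
    rw [uIoo_of_le hβ] at hx
    rw [sq_div_sq_eq_of_eqOn_linear hv hx]

theorem integral_sq_div_sq_of_eqOn_linear (hβ : 0 ≤ β) (hv : EqOn v (fun x => a * x) (Icc 0 β)) :
    ∫ x in 0..β, v x ^ 2 / x ^ 2 = a ^ 2 * β := by
  rw [intervalIntegral.integral_congr_Ioo_of_le hβ (g := fun _ => a ^ 2)
    fun x hx => sq_div_sq_eq_of_eqOn_linear hv hx]
  simp [mul_comm]

end Cell

theorem integral_sq_div_sq_pos {v : ℝ → ℝ} (hv : ContinuousOn v (Icc 0 1))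
    (hint : IntervalIntegrable (fun x => v x ^ 2 / x ^ 2) volume 0 1) {x₀ : ℝ}
    (hx₀ : x₀ ∈ Ioc 0 1) (hvx₀ : v x₀ ≠ 0) :
    0 < ∫ x in (0 : ℝ)..1, v x ^ 2 / x ^ 2 := by
  obtain ⟨hx₀0, hx₀1⟩ := hx₀
  have hcont : ContinuousOn (fun x => v x ^ 2 / x ^ 2) (Icc (x₀ / 2) x₀) :=
    ((hv.mono (Icc_subset_Icc (by linarith) hx₀1)).pow 2).div (by fun_prop)
      fun x hx => pow_ne_zero 2 (by linarith [hx.1])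
  calc (0 : ℝ) < ∫ x in x₀ / 2..x₀, v x ^ 2 / x ^ 2 :=
        intervalIntegral.integral_pos (by linarith) hcont (fun x _ => by positivity)
          ⟨x₀, ⟨by linarith, le_rfl⟩, by positivity⟩
    _ ≤ ∫ x in (0 : ℝ)..1, v x ^ 2 / x ^ 2 :=
        intervalIntegral.integral_mono_interval (by linarith) (by linarith) hx₀1
          (Filter.Eventually.of_forall fun x => by positivity) hint

namespace MemVh

variable {N k : ℕ} {v R : ℝ → ℝ} {lam : ℝ}

theorem exists_eqOn_linear (hv : MemVh N v) (hv0 : v 0 = 0) (hN : 0 < N) :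
    ∃ a, EqOn v (fun x => a * x) (Icc 0 (1 / N : ℝ)) := by
  obtain ⟨a, b, hab⟩ := hv.2 0 hN
  have hb : b = 0 := by simpa [hv0, eq_comm] using hab 0 ⟨by simp, by positivity⟩
  exact ⟨a, fun x hx => by simpa [hb] using hab x (by simpa using hx)⟩

theorem intervalIntegrable_deriv_sq_cell (hv : MemVh N v) (hk : k < N) :
    IntervalIntegrable (fun x => deriv v x ^ 2) volume (k / N) ((k + 1 : ℕ) / N) := by
  obtain ⟨a, b, hab⟩ := hv.2 k hk
  push_cast
  exact intervalIntegrable_deriv_sq_of_eqOn_affine (by gcongr; linarith) hab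

theorem intervalIntegrable_sq_div_sq_cell (hv : MemVh N v) (hv0 : v 0 = 0) (hk : k < N) :
    IntervalIntegrable (fun x => v x ^ 2 / x ^ 2) volume (k / N) ((k + 1 : ℕ) / N) := by
  rcases k.eq_zero_or_pos with rfl | hk0
  · obtain ⟨a, ha⟩ := hv.exists_eqOn_linear hv0 hk
    simpa using intervalIntegrable_sq_div_sq_of_eqOn_linear (by positivity) ha
  · obtain ⟨a, b, hab⟩ := hv.2 k hk
    have hα : (0 : ℝ) < k / N := div_pos (by exact_mod_cast hk0) (by exact_mod_cast hk0.trans hk)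
    push_cast
    exact intervalIntegrable_sq_div_sq_of_eqOn_affine hα (by gcongr; linarith) hab

theorem intervalIntegrable_sq_div_sq (hv : MemVh N v) (hv0 : v 0 = 0) (hN : 0 < N) :
    IntervalIntegrable (fun x => v x ^ 2 / x ^ 2) volume 0 1 := by
  have h := IntervalIntegrable.trans_iterate (a := fun k : ℕ => (k : ℝ) / N)
    fun k hk => hv.intervalIntegrable_sq_div_sq_cell hv0 hk
  simpa [hN.ne'] using h

theorem sq_mul_sub_sq_mul_le_cell (hv : MemVh N v) (hv0 : v 0 = 0) (hk : k < N)
    (hR : ∀ x ∈ Icc (1 / N : ℝ) 1, HasDerivAt R (-(lam / x ^ 2) - R x ^ 2) x)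
    (hR₀ : R (1 / N) / N ≤ 1 - lam) :
    v ((k + 1 : ℕ) / N) ^ 2 * R ((k + 1 : ℕ) / N) - v (k / N) ^ 2 * R (k / N) ≤
      (∫ x in (k / N : ℝ)..((k + 1 : ℕ) / N), deriv v x ^ 2) -
        lam * ∫ x in (k / N : ℝ)..((k + 1 : ℕ) / N), v x ^ 2 / x ^ 2 := by
  rcases k.eq_zero_or_pos with rfl | hk0
  · obtain ⟨a, ha⟩ := hv.exists_eqOn_linear hv0 hk
    have hN : (0 : ℝ) ≤ 1 / N := by positivity
    simp only [Nat.cast_zero, zero_div, zero_add, Nat.cast_one, hv0]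
    rw [integral_deriv_sq_of_eqOn_affine (b := 0) hN (by simpa using ha),
      integral_sq_div_sq_of_eqOn_linear hN ha, ha ⟨hN, le_rfl⟩]
    have h := mul_le_mul_of_nonneg_left hR₀ (by positivity : 0 ≤ a ^ 2 / N)
    calc (a * (1 / N)) ^ 2 * R (1 / N) - 0 ^ 2 * R 0 = a ^ 2 / N * (R (1 / N) / N) := by ring
      _ ≤ a ^ 2 / N * (1 - lam) := h
      _ = a ^ 2 * (1 / N - 0) - lam * (a ^ 2 * (1 / N)) := by ring
  · obtain ⟨a, b, hab⟩ := hv.2 k hk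
    have hkN : (k : ℝ) + 1 ≤ N := by exact_mod_cast hk
    have hα : (0 : ℝ) < k / N := div_pos (by exact_mod_cast hk0) (by exact_mod_cast hk0.trans hk)
    push_cast
    refine sq_mul_sub_sq_mul_le_of_eqOn_affine hα (by gcongr; linarith) hab
      fun x hx => hR x ⟨?_, ?_⟩
    · calc (1 / N : ℝ) ≤ k / N := by gcongr; exact_mod_cast hk0
        _ ≤ x := hx.1
    · calc x ≤ (k + 1) / N := hx.2
        _ ≤ 1 := div_le_one_of_le₀ hkN (Nat.cast_nonneg N)

theorem mul_integral_sq_div_sq_le (hv : MemVh N v) (hv0 : v 0 = 0) (hN : 0 < N)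
    (hR : ∀ x ∈ Icc (1 / N : ℝ) 1, HasDerivAt R (-(lam / x ^ 2) - R x ^ 2) x)
    (hR₁ : 0 ≤ R 1) (hR₀ : R (1 / N) / N ≤ 1 - lam) :
    lam * ∫ x in (0 : ℝ)..1, v x ^ 2 / x ^ 2 ≤ ∫ x in (0 : ℝ)..1, deriv v x ^ 2 := by
  have hsum := Finset.sum_le_sum fun k hk =>
    hv.sq_mul_sub_sq_mul_le_cell hv0 (Finset.mem_range.1 hk) hR hR₀
  rw [Finset.sum_range_sub (fun k : ℕ => v (k / N) ^ 2 * R (k / N)), Finset.sum_sub_distrib,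
    ← Finset.mul_sum,
    intervalIntegral.sum_integral_adjacent_intervals (a := fun k : ℕ => (k : ℝ) / N)
      fun k hk => hv.intervalIntegrable_deriv_sq_cell hk,
    intervalIntegral.sum_integral_adjacent_intervals (a := fun k : ℕ => (k : ℝ) / N)
      fun k hk => hv.intervalIntegrable_sq_div_sq_cell hv0 hk] at hsum
  have hN' : (N : ℝ) ≠ 0 := by positivity
  simp only [Nat.cast_zero, zero_div, div_self hN', hv0] at hsum
  linarith [mul_nonneg (sq_nonneg (v 1)) hR₁]

end MemVh

section GroundState

variable {μ L x : ℝ}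

theorem sin_mul_log_add_pos (hμ : 0 < μ) (hπ : μ * (L + 6) = π) (hx₁ : -L ≤ log x)
    (hx₂ : log x ≤ 0) : 0 < sin (μ * log x + μ * (L + 4)) := by
  apply sin_pos_of_pos_of_lt_pi <;> nlinarith

theorem groundStateLogDeriv_one_nonneg (hμ : 0 < μ) (hμ₁ : 2 * μ ≤ 1) (hπ : μ * (L + 6) = π) :
    0 ≤ groundStateLogDeriv μ (μ * (L + 4)) 1 := by
  have hphase : μ * log 1 + μ * (L + 4) = π - 2 * μ := by rw [log_one]; linarith
  have hsin : 0 < sin (2 * μ) := sin_pos_of_pos_of_lt_pi (by linarith) (by linarith [pi_gt_three])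
  have h := mul_cos_le_one_sub_sq_div_four_mul_sin (by linarith) hμ₁
  have hcot : μ * (cos (2 * μ) / sin (2 * μ)) ≤ 1 / 2 := by
    rw [← mul_div_assoc, div_le_iff₀ hsin]
    nlinarith [mul_nonneg (sq_nonneg μ) hsin.le]
  simp only [groundStateLogDeriv, hphase, cos_pi_sub, sin_pi_sub, div_one, neg_div, mul_neg]
  linarith

theorem mul_groundStateLogDeriv_le (hμ : 0 < μ) (hμ₁ : 4 * μ ≤ 1) (hx₀ : 0 < x)
    (hx : log x = -L) :
    x * groundStateLogDeriv μ (μ * (L + 4)) x ≤ 1 - (1 / 4 + μ ^ 2) := by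
  have hphase : μ * log x + μ * (L + 4) = 4 * μ := by rw [hx]; ring
  have hsin : 0 < sin (4 * μ) := sin_pos_of_pos_of_lt_pi (by linarith) (by linarith [pi_gt_three])
  have h := mul_cos_le_one_sub_sq_div_four_mul_sin (by linarith) hμ₁
  have hcot : μ * (cos (4 * μ) / sin (4 * μ)) ≤ 1 / 4 - μ ^ 2 := by
    rw [← mul_div_assoc, div_le_iff₀ hsin]
    nlinarith
  rw [groundStateLogDeriv, hphase, mul_div_cancel₀ _ hx₀.ne']
  linarith

end GroundState

theorem one_div_four_add_sq_le_Sdisc {N : ℕ} (hN : 4 * π ≤ log N + 6) :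
    1 / 4 + (π / (log N + 6)) ^ 2 ≤ Sdisc N := by
  set L := log (N : ℝ)
  set μ := π / (L + 6)
  have hL : 0 < L := by linarith [pi_gt_three]
  have hN₀ : 0 < N := Nat.pos_of_ne_zero fun h => by simp [L, h] at hL
  have hμ : 0 < μ := by positivity
  have hμ₁ : 4 * μ ≤ 1 := by
    rw [← mul_div_assoc, div_le_one (by linarith)]
    exact hN
  have hπ : μ * (L + 6) = π := div_mul_cancel₀ _ (by linarith)
  have hlogN : log (1 / N) = -L := by rw [one_div, log_inv]
  have hR : ∀ x ∈ Icc (1 / N : ℝ) 1, HasDerivAt (groundStateLogDeriv μ (μ * (L + 4)))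
      (-((1 / 4 + μ ^ 2) / x ^ 2) - groundStateLogDeriv μ (μ * (L + 4)) x ^ 2) x := by
    intro x hx
    have hx₀ : 0 < x := lt_of_lt_of_le (by positivity) hx.1
    refine hasDerivAt_groundStateLogDeriv hx₀ (sin_mul_log_add_pos hμ hπ ?_ ?_).ne'
    · rw [← hlogN]
      exact log_le_log (by positivity) hx.1
    · exact log_nonpos hx₀.le hx.2
  have hR₀ := mul_groundStateLogDeriv_le hμ hμ₁ (by positivity : (0 : ℝ) < 1 / N) hlogN
  rw [one_div_mul_eq_div] at hR₀
  refine le_csInf ⟨_, id, ⟨continuousOn_id, fun k _ => ⟨1, 0, fun x _ => by simp⟩⟩, rfl,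
    ⟨1, by simp, by simp⟩, rfl⟩ ?_
  rintro _ ⟨v, hv, hv0, ⟨x₀, hx₀, hvx₀⟩, rfl⟩
  have hx₀0 : 0 < x₀ := hx₀.1.lt_of_ne fun h => hvx₀ (h ▸ hv0)
  rw [le_div_iff₀ (integral_sq_div_sq_pos hv.1 (hv.intervalIntegrable_sq_div_sq hv0 hN₀)
    ⟨hx₀0, hx₀.2⟩ hvx₀)]
  exact hv.mul_integral_sq_div_sq_le hv0 hN₀ hR
    (groundStateLogDeriv_one_nonneg hμ (by linarith) hπ) hR₀

theorem discrete_hardy_lower_bound :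
    ∀ η : ℝ, 0 < η → ∃ N₀ : ℕ, ∀ N : ℕ, N₀ ≤ N →
      Sdisc N ≥ 1/4 + π ^ 2 / (6 + |Real.log (1 / (N : ℝ))|) ^ 2
        - η / (Real.log (1 / (N : ℝ))) ^ 2 := by
  intro η hη
  refine ⟨⌈exp (4 * π - 6)⌉₊, fun N hN => ?_⟩
  have hexp : exp (4 * π - 6) ≤ N := Nat.ceil_le.1 hN
  have hL : 4 * π - 6 ≤ log N := (le_log_iff_exp_le ((exp_pos _).trans_le hexp)).2 hexp
  have hlog : log (1 / (N : ℝ)) = -log N := by rw [one_div, log_inv]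
  rw [hlog, abs_neg, abs_of_nonneg (by linarith [pi_gt_three]), add_comm 6, ← div_pow, ge_iff_le]
  calc 1 / 4 + (π / (log N + 6)) ^ 2 - η / (-log N) ^ 2
      ≤ 1 / 4 + (π / (log N + 6)) ^ 2 := by linarith [div_nonneg hη.le (sq_nonneg (-log N))]
    _ ≤ Sdisc N := one_div_four_add_sq_le_Sdisc (by linarith)

end
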